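/- The facets of the oriented matroid M_T of a triangulation T of a convex m-gon are exactly the triangles of T (upper facets) and the triangles of T + 1 (lower facets); no other 3-subset of [m] is a facet. -/
import Mathlib


namespace CyclicTri

variable {m : ℕ}

/-- Position of `v` relative to base point `a` in the cyclic order on `ZMod m`. -/
def pos (a v : ZMod m) : ℕ := (v - a).val

/-- `a ≺ b ≺ c` in the cyclic order. -/
def Cyc3 (a b c : ZMod m) : Prop := 0 < pos a b ∧ pos a b < pos a c

/-- `a ≺ b ≺ c ≺ d` in the cyclic order. -/
def Cyc4 (a b c d : ZMod m) : Prop :=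
  0 < pos a b ∧ pos a b < pos a c ∧ pos a c < pos a d

/-- The arcs `xy` and `x'y'` cross: their endpoints interleave cyclically. -/
def Cross (x y x' y' : ZMod m) : Prop := Cyc4 x x' y y' ∨ Cyc4 x' x y' y

/-- `xy` is a diagonal of the polygon: the endpoints are distinct and non-adjacent. -/
def Diag (x y : ZMod m) : Prop := x ≠ y ∧ y ≠ x + 1 ∧ x ≠ y + 1

/-- `A` is (the symmetrised set of arcs of) a triangulation of the convex `m`-gon:
a maximal set of pairwise non-crossing diagonals. -/
def IsTriangulation (A : Set (ZMod m × ZMod m)) : Prop :=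
  (∀ x y, (x, y) ∈ A → (y, x) ∈ A) ∧
  (∀ x y, (x, y) ∈ A → Diag x y) ∧
  (∀ x y x' y', (x, y) ∈ A → (x', y') ∈ A → ¬ Cross x y x' y') ∧
  (∀ x y, Diag x y → (∀ x' y', (x', y') ∈ A → ¬ Cross x y x' y') → (x, y) ∈ A)

/-- There is an arc `xy` of `A` with `a ≺ b ≼ x ≺ c ≺ d ≼ y` (the `+1` case of `χ_T`). -/
def PosCase (A : Set (ZMod m × ZMod m)) (a b c d : ZMod m) : Prop :=
  ∃ x y, (x, y) ∈ A ∧ 0 < pos a b ∧ pos a b ≤ pos a x ∧ pos a x < pos a c ∧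
    pos a c < pos a d ∧ pos a d ≤ pos a y

/-- There is an arc `xy` of `A` with `a ≼ x ≺ b ≺ c ≼ y ≺ d` (the `-1` case of `χ_T`). -/
def NegCase (A : Set (ZMod m × ZMod m)) (a b c d : ZMod m) : Prop :=
  ∃ x y, (x, y) ∈ A ∧ pos a x < pos a b ∧ pos a b < pos a c ∧ pos a c ≤ pos a y ∧
    pos a y < pos a d

open Classical in
/-- The chirotope `χ_T` on cyclically ordered tuples `a ≺ b ≺ c ≺ d`. -/
noncomputable def chiCyc (A : Set (ZMod m × ZMod m)) (a b c d : ZMod m) : ℤ :=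
  if PosCase A a b c d then 1 else if NegCase A a b c d then -1 else 0

end CyclicTri
namespace CyclicTri
variable {m : ℕ}

open Classical in
/-- The alternating extension `χ_T(x, a, b, c)` for `a ≺ b ≺ c` and `x ∉ {a,b,c}`. -/
noncomputable def chiX (A : Set (ZMod m × ZMod m)) (x a b c : ZMod m) : ℤ :=
  if Cyc4 x a b c then chiCyc A x a b c
  else if Cyc4 a x b c then - chiCyc A a x b c
  else chiCyc A a b x c

/-- `xy` is an arc of `B` or a boundary edge of the polygon. -/
def EdgeOf (B : Set (ZMod m × ZMod m)) (x y : ZMod m) : Prop :=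
  (x, y) ∈ B ∨ y = x + 1 ∨ x = y + 1

/-- `abc` is a triangle of the triangulation `A`: all sides are arcs or boundary edges. -/
def IsTriangleOf (A : Set (ZMod m × ZMod m)) (a b c : ZMod m) : Prop :=
  Cyc3 a b c ∧ EdgeOf A a b ∧ EdgeOf A b c ∧ EdgeOf A c a

/-- `{a,b,c}` is a facet of the oriented matroid `M_T`: the complementary cocircuit
has all of its elements of the same sign. -/
def IsFacet (A : Set (ZMod m × ZMod m)) (a b c : ZMod m) : Prop :=
  Cyc3 a b c ∧
    ((∀ x : ZMod m, x ≠ a → x ≠ b → x ≠ c → chiX A x a b c = 1) ∨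
     (∀ x : ZMod m, x ≠ a → x ≠ b → x ≠ c → chiX A x a b c = -1))

end CyclicTri

/-! ### Auxiliary lemmas -/

namespace CyclicTri

variable {m : ℕ} {A : Set (ZMod m × ZMod m)}

lemma pos_lt [NeZero m] (a v : ZMod m) : pos a v < m := ZMod.val_lt _

lemma pos_self (a : ZMod m) : pos a a = 0 := by simp [pos]

lemma pos_eq_zero [NeZero m] {a v : ZMod m} : pos a v = 0 ↔ v = a := by
  rw [pos, ZMod.val_eq_zero, sub_eq_zero]

lemma pos_inj [NeZero m] {a u v : ZMod m} (h : pos a u = pos a v) : u = v := by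
  have := ZMod.val_injective m h
  exact sub_left_inj.mp this

lemma pos_rebase [NeZero m] (a x w : ZMod m) :
    pos x w = (pos a w + (m - pos a x)) % m := by
  have h : w - x = (w - a) + -(x - a) := by ring
  unfold pos
  rw [h, ZMod.val_add, ZMod.neg_val]
  split_ifs with h0
  · rw [h0, ZMod.val_zero, Nat.sub_zero, Nat.add_zero]
    exact (Nat.add_mod_right _ _).symm
  · rfl

lemma pos_rebase_ge [NeZero m] {a x w : ZMod m} (h : pos a x ≤ pos a w) :
    pos x w = pos a w - pos a x := by
  have h1 := pos_lt a w; have h2 := pos_lt a x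
  rw [pos_rebase a x w]
  have e : pos a w + (m - pos a x) = (pos a w - pos a x) + m := by omega
  rw [e, Nat.add_mod_right, Nat.mod_eq_of_lt (by omega)]

lemma pos_rebase_lt [NeZero m] {a x w : ZMod m} (h : pos a w < pos a x) :
    pos x w = pos a w + m - pos a x := by
  have h2 := pos_lt a x
  rw [pos_rebase a x w]
  have e : pos a w + (m - pos a x) = pos a w + m - pos a x := by omega
  rw [e, Nat.mod_eq_of_lt (by omega)]

lemma pos_add_one [NeZero m] {a w : ZMod m} (h : pos a w + 1 < m) :
    pos a (w + 1) = pos a w + 1 := by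
  have h1 : (1 : ZMod m).val = 1 := ZMod.val_one'' (by omega)
  have e : w + 1 - a = (w - a) + 1 := by ring
  unfold pos at h ⊢
  rw [e, ZMod.val_add, h1, Nat.mod_eq_of_lt h]

lemma pos_sub_one [NeZero m] {a w : ZMod m} (h : 0 < pos a w) :
    pos a (w - 1) = pos a w - 1 := by
  have hm : m ≠ 1 := by have := pos_lt a w; omega
  have h1 : (1 : ZMod m).val = 1 := ZMod.val_one'' hm
  have e : w - 1 - a = (w - a) - 1 := by ring
  unfold pos at h ⊢
  rw [e, ZMod.val_sub (by rw [h1]; omega), h1]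

lemma pos_neg_one [NeZero m] (hm : 2 ≤ m) (a : ZMod m) : pos a (a - 1) = m - 1 := by
  have h1 : (1 : ZMod m).val = 1 := ZMod.val_one'' (by omega)
  have hne : (1 : ZMod m) ≠ 0 := by
    intro h
    rw [h, ZMod.val_zero] at h1
    omega
  have e : a - 1 - a = -1 := by ring
  unfold pos
  rw [e, ZMod.neg_val, if_neg hne, h1]

lemma pos_shift (a b : ZMod m) : pos (a - 1) (b - 1) = pos a b := by
  unfold pos
  rw [show b - 1 - (a - 1) = b - a from by ring]

lemma cyc4_of [NeZero m] {a u v w z : ZMod m} (h1 : pos a u < pos a v)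
    (h2 : pos a v < pos a w) (h3 : pos a w < pos a z) : Cyc4 u v w z := by
  have e1 : pos u v = pos a v - pos a u := pos_rebase_ge (by omega)
  have e2 : pos u w = pos a w - pos a u := pos_rebase_ge (by omega)
  have e3 : pos u z = pos a z - pos a u := pos_rebase_ge (by omega)
  exact ⟨by omega, by omega, by omega⟩

lemma noCross [NeZero m] (hT : IsTriangulation A) (o : ZMod m) {u v w z : ZMod m}
    (h1 : (u, w) ∈ A) (h2 : (v, z) ∈ A) (p1 : pos o u < pos o v)
    (p2 : pos o v < pos o w) (p3 : pos o w < pos o z) : False :=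
  hT.2.2.1 u w v z h1 h2 (Or.inl (cyc4_of p1 p2 p3))

lemma chiCyc_eq_one {a b c d : ZMod m} (h : PosCase A a b c d) :
    chiCyc A a b c d = 1 := by
  unfold chiCyc
  rw [if_pos h]

lemma chiCyc_eq_neg_one {a b c d : ZMod m} (h1 : ¬ PosCase A a b c d)
    (h2 : NegCase A a b c d) : chiCyc A a b c d = -1 := by
  unfold chiCyc
  rw [if_neg h1, if_pos h2]

lemma posCase_of_chi {a b c d : ZMod m} (h : chiCyc A a b c d = 1) :
    PosCase A a b c d := by
  unfold chiCyc at h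
  by_cases h1 : PosCase A a b c d
  · exact h1
  · rw [if_neg h1] at h
    by_cases h2 : NegCase A a b c d
    · rw [if_pos h2] at h
      exact absurd h (by norm_num)
    · rw [if_neg h2] at h
      exact absurd h (by norm_num)

lemma negCase_of_chi {a b c d : ZMod m} (h : chiCyc A a b c d = -1) :
    ¬ PosCase A a b c d ∧ NegCase A a b c d := by
  unfold chiCyc at h
  by_cases h1 : PosCase A a b c d
  · rw [if_pos h1] at h
    exact absurd h (by norm_num)
  · rw [if_neg h1] at h
    by_cases h2 : NegCase A a b c d
    · exact ⟨h1, h2⟩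
    · rw [if_neg h2] at h
      exact absurd h (by norm_num)

lemma chiX_outer [NeZero m] {a b c x : ZMod m} (hb : 0 < pos a b)
    (hbc : pos a b < pos a c) (hcx : pos a c < pos a x) :
    chiX A x a b c = chiCyc A x a b c := by
  have hxm := pos_lt a x
  have e1 : pos x a = 0 + m - pos a x := by
    rw [pos_rebase_lt (by rw [pos_self]; omega), pos_self]
  have e2 : pos x b = pos a b + m - pos a x := pos_rebase_lt (by omega)
  have e3 : pos x c = pos a c + m - pos a x := pos_rebase_lt (by omega)
  have hc : Cyc4 x a b c := ⟨by omega, by omega, by omega⟩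
  unfold chiX
  rw [if_pos hc]

lemma chiX_inner [NeZero m] {a b c x : ZMod m} (hx : 0 < pos a x)
    (hxb : pos a x < pos a b) (hbc : pos a b < pos a c) :
    chiX A x a b c = - chiCyc A a x b c := by
  have hbm := pos_lt a b
  have e1 : pos x a = 0 + m - pos a x := by
    rw [pos_rebase_lt (by rw [pos_self]; omega), pos_self]
  have e2 : pos x b = pos a b - pos a x := pos_rebase_ge (by omega)
  have hn : ¬ Cyc4 x a b c := by
    rintro ⟨k1, k2, k3⟩
    omega
  have hc : Cyc4 a x b c := ⟨hx, hxb, hbc⟩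
  unfold chiX
  rw [if_neg hn, if_pos hc]

lemma chiX_middle [NeZero m] {a b c x : ZMod m} (hb : 0 < pos a b)
    (hbx : pos a b < pos a x) (hxc : pos a x < pos a c) :
    chiX A x a b c = chiCyc A a b x c := by
  have hcm := pos_lt a c
  have e2 : pos x b = pos a b + m - pos a x := pos_rebase_lt (by omega)
  have e3 : pos x c = pos a c - pos a x := pos_rebase_ge (by omega)
  have hn1 : ¬ Cyc4 x a b c := by
    rintro ⟨k1, k2, k3⟩
    omega
  have hn2 : ¬ Cyc4 a x b c := by
    rintro ⟨k1, k2, k3⟩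
    omega
  unfold chiX
  rw [if_neg hn1, if_neg hn2]

lemma posCase_outer [NeZero m] {a b c x : ZMod m} (hb : 0 < pos a b)
    (hbc : pos a b < pos a c) (hcx : pos a c < pos a x) :
    PosCase A x a b c ↔
      ∃ u v, (u, v) ∈ A ∧ pos a u < pos a b ∧ pos a c ≤ pos a v ∧ pos a v < pos a x := by
  have hxm := pos_lt a x
  have e1 : pos x a = 0 + m - pos a x := by
    rw [pos_rebase_lt (by rw [pos_self]; omega), pos_self]
  have e2 : pos x b = pos a b + m - pos a x := pos_rebase_lt (by omega)
  have e3 : pos x c = pos a c + m - pos a x := pos_rebase_lt (by omega)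
  constructor
  · rintro ⟨u, v, huv, k1, k2, k3, k4, k5⟩
    have hum := pos_lt a u; have hvm := pos_lt a v
    rcases le_or_gt (pos a x) (pos a u) with h | h
    · have eu : pos x u = pos a u - pos a x := pos_rebase_ge h
      exact ⟨u, v, huv, by omega, by omega, by omega⟩
    · have eu : pos x u = pos a u + m - pos a x := pos_rebase_lt h
      rcases le_or_gt (pos a x) (pos a v) with h' | h'
      · have ev : pos x v = pos a v - pos a x := pos_rebase_ge h'
        exact ⟨u, v, huv, by omega, by omega, by omega⟩
      · have ev : pos x v = pos a v + m - pos a x := pos_rebase_lt h'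
        exact ⟨u, v, huv, by omega, by omega, by omega⟩
  · rintro ⟨u, v, huv, k1, k2, k3⟩
    have eu : pos x u = pos a u + m - pos a x := pos_rebase_lt (by omega)
    have ev : pos x v = pos a v + m - pos a x := pos_rebase_lt (by omega)
    exact ⟨u, v, huv, by omega, by omega, by omega, by omega, by omega⟩

lemma negCase_outer [NeZero m] {a b c x : ZMod m} (hb : 0 < pos a b)
    (hbc : pos a b < pos a c) (hcx : pos a c < pos a x) :
    NegCase A x a b c ↔
      ∃ u v, (u, v) ∈ A ∧ pos a x ≤ pos a u ∧ pos a b ≤ pos a v ∧ pos a v < pos a c := by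
  have hxm := pos_lt a x
  have e1 : pos x a = 0 + m - pos a x := by
    rw [pos_rebase_lt (by rw [pos_self]; omega), pos_self]
  have e2 : pos x b = pos a b + m - pos a x := pos_rebase_lt (by omega)
  have e3 : pos x c = pos a c + m - pos a x := pos_rebase_lt (by omega)
  constructor
  · rintro ⟨u, v, huv, k1, k2, k3, k4⟩
    have hum := pos_lt a u; have hvm := pos_lt a v
    rcases le_or_gt (pos a x) (pos a u) with h | h
    · have eu : pos x u = pos a u - pos a x := pos_rebase_ge h
      rcases le_or_gt (pos a x) (pos a v) with h' | h'
      · have ev : pos x v = pos a v - pos a x := pos_rebase_ge h'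
        exact ⟨u, v, huv, by omega, by omega, by omega⟩
      · have ev : pos x v = pos a v + m - pos a x := pos_rebase_lt h'
        exact ⟨u, v, huv, by omega, by omega, by omega⟩
    · have eu : pos x u = pos a u + m - pos a x := pos_rebase_lt h
      exact ⟨u, v, huv, by omega, by omega, by omega⟩
  · rintro ⟨u, v, huv, k1, k2, k3⟩
    have hum := pos_lt a u
    have eu : pos x u = pos a u - pos a x := pos_rebase_ge k1
    have ev : pos x v = pos a v + m - pos a x := pos_rebase_lt (by omega)
    exact ⟨u, v, huv, by omega, by omega, by omega, by omega⟩

/-! ### The four main implications -/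

lemma facet_pos_of_tri [NeZero m] {a b c : ZMod m} (hT : IsTriangulation A)
    (htri : IsTriangleOf A a b c) :
    ∀ x : ZMod m, x ≠ a → x ≠ b → x ≠ c → chiX A x a b c = 1 := by
  obtain ⟨⟨hb, hbc⟩, eab, ebc, eca⟩ := htri
  have hcm := pos_lt a c
  have hm2 : 2 ≤ m := by omega
  have e1 := pos_add_one (a := a) (w := a) (by rw [pos_self]; omega)
  rw [pos_self] at e1
  intro x hxa hxb hxc
  have hx0 : pos a x ≠ 0 := fun h => hxa (pos_eq_zero.mp h)
  have hxb' : pos a x ≠ pos a b := fun h => hxb (pos_inj h)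
  have hxc' : pos a x ≠ pos a c := fun h => hxc (pos_inj h)
  have hxm := pos_lt a x
  rcases show (0 < pos a x ∧ pos a x < pos a b) ∨
      (pos a b < pos a x ∧ pos a x < pos a c) ∨ pos a c < pos a x by omega with
    ⟨h1, h2⟩ | ⟨h1, h2⟩ | h1
  · -- x strictly between a and b
    have hab : (a, b) ∈ A := by
      rcases eab with h | h | h
      · exact h
      · exfalso
        have : pos a b = 0 + 1 := by rw [h, e1]
        omega
      · exfalso
        have hb' : b = a - 1 := by linear_combination -h
        have : pos a b = m - 1 := by rw [hb', pos_neg_one hm2]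
        omega
    rw [chiX_inner h1 h2 hbc]
    have hnp : ¬ PosCase A a x b c := by
      rintro ⟨u, v, huv, k1, k2, k3, k4, k5⟩
      exact noCross hT a hab huv (by rw [pos_self]; omega) (by omega) (by omega)
    have hng : NegCase A a x b c :=
      ⟨a, b, hab, by rw [pos_self]; omega, h2, le_refl _, hbc⟩
    rw [chiCyc_eq_neg_one hnp hng]
    norm_num
  · -- x strictly between b and c
    have hbc' : (b, c) ∈ A := by
      rcases ebc with h | h | h
      · exact h
      · exfalso
        have : pos a c = pos a b + 1 := by rw [h, pos_add_one (by omega)]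
        omega
      · exfalso
        have hc' : c = b - 1 := by linear_combination -h
        have : pos a c = pos a b - 1 := by rw [hc', pos_sub_one hb]
        omega
    rw [chiX_middle hb h1 h2]
    exact chiCyc_eq_one ⟨b, c, hbc', hb, le_refl _, h1, h2, le_refl _⟩
  · -- x strictly between c and a
    rw [chiX_outer hb hbc h1]
    have hca : (a, c) ∈ A := by
      rcases eca with h | h | h
      · exact hT.1 _ _ h
      · exfalso
        have hc' : c = a - 1 := by linear_combination -h
        have : pos a c = m - 1 := by rw [hc', pos_neg_one hm2]
        omega
      · exfalso
        have : pos a c = 0 + 1 := by rw [h, e1]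
        omega
    exact chiCyc_eq_one ((posCase_outer hb hbc h1).mpr
      ⟨a, c, hca, by rw [pos_self]; omega, le_refl _, h1⟩)

lemma facet_neg_of_tri [NeZero m] {a b c : ZMod m} (hT : IsTriangulation A)
    (habc : Cyc3 a b c) (htri : IsTriangleOf A (a - 1) (b - 1) (c - 1)) :
    ∀ x : ZMod m, x ≠ a → x ≠ b → x ≠ c → chiX A x a b c = -1 := by
  obtain ⟨hb, hbc⟩ := habc
  obtain ⟨-, eab, ebc, eca⟩ := htri
  have hcm := pos_lt a c
  have hm2 : 2 ≤ m := by omega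
  have pm1 : pos a (a - 1) = m - 1 := pos_neg_one hm2 a
  have pβ1 : pos a (b - 1) = pos a b - 1 := pos_sub_one hb
  have pγ1 : pos a (c - 1) = pos a c - 1 := pos_sub_one (by omega)
  have e1 := pos_add_one (a := a) (w := a) (by rw [pos_self]; omega)
  rw [pos_self] at e1
  intro x hxa hxb hxc
  have hx0 : pos a x ≠ 0 := fun h => hxa (pos_eq_zero.mp h)
  have hxb' : pos a x ≠ pos a b := fun h => hxb (pos_inj h)
  have hxc' : pos a x ≠ pos a c := fun h => hxc (pos_inj h)
  have hxm := pos_lt a x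
  rcases show (0 < pos a x ∧ pos a x < pos a b) ∨
      (pos a b < pos a x ∧ pos a x < pos a c) ∨ pos a c < pos a x by omega with
    ⟨h1, h2⟩ | ⟨h1, h2⟩ | h1
  · -- x strictly between a and b
    have harc : (b - 1, a - 1) ∈ A := by
      rcases eab with h | h | h
      · exact hT.1 _ _ h
      · exfalso
        have hb' : b = a + 1 := by linear_combination h
        have : pos a b = 0 + 1 := by rw [hb', e1]
        omega
      · exfalso
        have hb' : b = a - 1 := by linear_combination -h
        have : pos a b = m - 1 := by rw [hb', pm1]
        omega
    rw [chiX_inner h1 h2 hbc]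
    have : chiCyc A a x b c = 1 := chiCyc_eq_one
      ⟨b - 1, a - 1, harc, h1, by omega, by omega, hbc, by omega⟩
    rw [this]
  · -- x strictly between b and c
    have harc : (b - 1, c - 1) ∈ A := by
      rcases ebc with h | h | h
      · exact h
      · exfalso
        have hc' : c = b + 1 := by linear_combination h
        have : pos a c = pos a b + 1 := by rw [hc', pos_add_one (by omega)]
        omega
      · exfalso
        have hc' : c = b - 1 := by linear_combination -h
        have : pos a c = pos a b - 1 := by rw [hc', pβ1]
        omega
    rw [chiX_middle hb h1 h2]
    have hnp : ¬ PosCase A a b x c := by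
      rintro ⟨u, v, huv, k1, k2, k3, k4, k5⟩
      exact noCross hT a harc huv (by omega) (by omega) (by omega)
    have hng : NegCase A a b x c :=
      ⟨b - 1, c - 1, harc, by omega, h1, by omega, by omega⟩
    exact chiCyc_eq_neg_one hnp hng
  · -- x strictly between c and a
    have harc0 : (c - 1, a - 1) ∈ A := by
      rcases eca with h | h | h
      · exact h
      · exfalso
        have hc' : c = a - 1 := by linear_combination -h
        have : pos a c = m - 1 := by rw [hc', pm1]
        omega
      · exfalso
        have hc' : c = a + 1 := by linear_combination h
        have : pos a c = 0 + 1 := by rw [hc', e1]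
        omega
    have harc := hT.1 _ _ harc0
    rw [chiX_outer hb hbc h1]
    have hnp : ¬ PosCase A x a b c := by
      intro hp
      obtain ⟨u, v, huv, k1, k2, k3⟩ := (posCase_outer hb hbc h1).mp hp
      exact noCross hT a huv harc0 (by omega) (by omega) (by omega)
    have hng : NegCase A x a b c := (negCase_outer hb hbc h1).mpr
      ⟨a - 1, c - 1, harc, by omega, by omega, by omega⟩
    exact chiCyc_eq_neg_one hnp hng

lemma tri_of_pos [NeZero m] {a b c : ZMod m} (hT : IsTriangulation A)
    (habc : Cyc3 a b c)
    (hall : ∀ x : ZMod m, x ≠ a → x ≠ b → x ≠ c → chiX A x a b c = 1) :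
    IsTriangleOf A a b c := by
  obtain ⟨hb, hbc⟩ := habc
  have hcm := pos_lt a c
  have hbm := pos_lt a b
  have hm2 : 2 ≤ m := by omega
  have e1 := pos_add_one (a := a) (w := a) (by rw [pos_self]; omega)
  rw [pos_self] at e1
  refine ⟨⟨hb, hbc⟩, ?_, ?_, ?_⟩
  · -- EdgeOf A a b
    by_cases h1 : b = a + 1
    · exact Or.inr (Or.inl h1)
    by_cases h0 : (a, b) ∈ A
    · exact Or.inl h0
    exfalso
    have hβ2 : pos a b ≠ 1 := by
      intro h
      exact h1 (pos_inj (by rw [h, e1]))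
    have hne_a : a + 1 ≠ a := by
      intro h
      rw [h, pos_self] at e1
      omega
    have hne_b : a + 1 ≠ b := by
      intro h
      rw [← h] at hβ2
      omega
    have hne_c : a + 1 ≠ c := by
      intro h
      rw [← h] at hbc
      omega
    have h := hall (a + 1) hne_a hne_b hne_c
    rw [chiX_inner (by omega) (by omega) hbc] at h
    have h' : chiCyc A a (a + 1) b c = -1 := by omega
    obtain ⟨-, hng⟩ := negCase_of_chi h'
    obtain ⟨u, w, huw, k1, k2, k3, k4⟩ := hng
    have hu : u = a := pos_eq_zero.mp (by omega)
    rw [hu] at huw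
    have hwb : pos a w ≠ pos a b := by
      intro he
      rw [pos_inj he] at huw
      exact h0 huw
    have hw_a : w ≠ a := by
      intro h
      rw [h, pos_self] at k3
      omega
    have hw_b : w ≠ b := fun h => hwb (by rw [h])
    have hw_c : w ≠ c := by
      intro h
      rw [h] at k4
      omega
    have h2 := hall w hw_a hw_b hw_c
    rw [chiX_middle hb (by omega) k4] at h2
    obtain ⟨u', v', h', l1, l2, l3, l4, l5⟩ := posCase_of_chi h2
    exact noCross hT a huw h' (by rw [pos_self]; omega) l3 (by omega)
  · -- EdgeOf A b c
    by_cases h1 : c = b + 1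
    · exact Or.inr (Or.inl h1)
    by_cases h0 : (b, c) ∈ A
    · exact Or.inl h0
    exfalso
    have pb1 : pos a (b + 1) = pos a b + 1 := pos_add_one (by omega)
    have hγ : pos a c ≠ pos a b + 1 := by
      intro h
      exact h1 (pos_inj (by rw [h, pb1]))
    have hne_a : b + 1 ≠ a := by
      intro h
      rw [h, pos_self] at pb1
      omega
    have hne_b : b + 1 ≠ b := by
      intro h
      rw [h] at pb1
      omega
    have hne_c : b + 1 ≠ c := by
      intro h
      rw [← h] at hγ
      omega
    have h := hall (b + 1) hne_a hne_b hne_c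
    rw [chiX_middle hb (by omega) (by omega)] at h
    obtain ⟨u, w, huw, k1, k2, k3, k4, k5⟩ := posCase_of_chi h
    have hu : u = b := pos_inj (a := a) (by omega)
    rw [hu] at huw
    have hwc : pos a w ≠ pos a c := by
      intro he
      rw [pos_inj he] at huw
      exact h0 huw
    have hwm := pos_lt a w
    have hw_a : w ≠ a := by
      intro h
      rw [h, pos_self] at k5
      omega
    have hw_b : w ≠ b := by
      intro h
      rw [h] at k5
      omega
    have hw_c : w ≠ c := fun h => hwc (by rw [h])
    have h2 := hall w hw_a hw_b hw_c
    rw [chiX_outer hb hbc (by omega)] at h2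
    obtain ⟨u', v', h', l1, l2, l3⟩ :=
      (posCase_outer hb hbc (by omega)).mp (posCase_of_chi h2)
    exact noCross hT a h' huw l1 (by omega) l3
  · -- EdgeOf A c a
    by_cases h1 : a = c + 1
    · exact Or.inr (Or.inl h1)
    by_cases h0 : (c, a) ∈ A
    · exact Or.inl h0
    exfalso
    have pm1 : pos a (a - 1) = m - 1 := pos_neg_one hm2 a
    have hγm1 : pos a c ≠ m - 1 := by
      intro h
      have hc' : c = a - 1 := pos_inj (by rw [h, pm1])
      exact h1 (by linear_combination -hc')
    have pc1 : pos a (c + 1) = pos a c + 1 := pos_add_one (by omega)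
    have hne_a : c + 1 ≠ a := by
      intro h
      rw [h, pos_self] at pc1
      omega
    have hne_b : c + 1 ≠ b := by
      intro h
      rw [h] at pc1
      omega
    have hne_c : c + 1 ≠ c := by
      intro h
      rw [h] at pc1
      omega
    have h := hall (c + 1) hne_a hne_b hne_c
    rw [chiX_outer hb hbc (by omega)] at h
    obtain ⟨u, w, huw, k1, k2, k3⟩ :=
      (posCase_outer hb hbc (by omega)).mp (posCase_of_chi h)
    have hw : w = c := pos_inj (a := a) (by omega)
    rw [hw] at huw
    have hu0 : pos a u ≠ 0 := by
      intro h'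
      have hu : u = a := pos_eq_zero.mp h'
      rw [hu] at huw
      exact h0 (hT.1 _ _ huw)
    have hu_a : u ≠ a := by
      intro h
      rw [h, pos_self] at hu0
      exact hu0 rfl
    have hu_b : u ≠ b := by
      intro h
      rw [h] at k1
      omega
    have hu_c : u ≠ c := by
      intro h
      rw [h] at k1
      omega
    have h2 := hall u hu_a hu_b hu_c
    rw [chiX_inner (by omega) k1 hbc] at h2
    have h2' : chiCyc A a u b c = -1 := by omega
    exact (negCase_of_chi h2').1 ⟨u, c, huw, by omega, le_refl _, k1, hbc, le_refl _⟩

lemma tri_of_neg [NeZero m] {a b c : ZMod m} (hT : IsTriangulation A)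
    (habc : Cyc3 a b c)
    (hall : ∀ x : ZMod m, x ≠ a → x ≠ b → x ≠ c → chiX A x a b c = -1) :
    IsTriangleOf A (a - 1) (b - 1) (c - 1) := by
  obtain ⟨hb, hbc⟩ := habc
  have hcm := pos_lt a c
  have hbm := pos_lt a b
  have hm2 : 2 ≤ m := by omega
  have pm1 : pos a (a - 1) = m - 1 := pos_neg_one hm2 a
  have pβ1 : pos a (b - 1) = pos a b - 1 := pos_sub_one hb
  have pγ1 : pos a (c - 1) = pos a c - 1 := pos_sub_one (by omega)
  have e1 := pos_add_one (a := a) (w := a) (by rw [pos_self]; omega)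
  rw [pos_self] at e1
  refine ⟨⟨by rw [pos_shift]; exact hb, by rw [pos_shift, pos_shift]; exact hbc⟩,
    ?_, ?_, ?_⟩
  · -- EdgeOf A (a-1) (b-1)
    by_cases h1 : pos a b = 1
    · have hb' : b = a + 1 := pos_inj (by rw [h1, e1])
      exact Or.inr (Or.inl (by linear_combination hb'))
    by_cases h0 : (a - 1, b - 1) ∈ A
    · exact Or.inl h0
    exfalso
    have hxa : b - 1 ≠ a := by
      intro h
      rw [h, pos_self] at pβ1
      omega
    have hxb : b - 1 ≠ b := by
      intro h
      rw [h] at pβ1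
      omega
    have hxc : b - 1 ≠ c := by
      intro h
      rw [h] at pβ1
      omega
    have h := hall (b - 1) hxa hxb hxc
    rw [chiX_inner (by omega) (by omega) hbc] at h
    have h' : chiCyc A a (b - 1) b c = 1 := by omega
    obtain ⟨u, w, huw, k1, k2, k3, k4, k5⟩ := posCase_of_chi h'
    have hu : u = b - 1 := pos_inj (a := a) (by omega)
    subst hu
    have hwm := pos_lt a w
    have hw : pos a w ≠ m - 1 := by
      intro hw
      have hw' : w = a - 1 := pos_inj (by rw [hw, pm1])
      rw [hw'] at huw
      exact h0 (hT.1 _ _ huw)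
    have pw1 : pos a (w + 1) = pos a w + 1 := pos_add_one (by omega)
    have hya : w + 1 ≠ a := by
      intro h''
      rw [h'', pos_self] at pw1
      omega
    have hyb : w + 1 ≠ b := by
      intro h''
      rw [h''] at pw1
      omega
    have hyc : w + 1 ≠ c := by
      intro h''
      rw [h''] at pw1
      omega
    have h2 := hall (w + 1) hya hyb hyc
    rw [chiX_outer hb hbc (by omega)] at h2
    obtain ⟨hnp, -⟩ := negCase_of_chi h2
    exact hnp ((posCase_outer hb hbc (by omega)).mpr
      ⟨b - 1, w, huw, by omega, k5, by omega⟩)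
  · -- EdgeOf A (b-1) (c-1)
    by_cases h1 : pos a c = pos a b + 1
    · have pb1 : pos a (b + 1) = pos a b + 1 := pos_add_one (by omega)
      have hc' : c = b + 1 := pos_inj (by rw [h1, pb1])
      exact Or.inr (Or.inl (by linear_combination hc'))
    by_cases h0 : (b - 1, c - 1) ∈ A
    · exact Or.inl h0
    exfalso
    have hxa : c - 1 ≠ a := by
      intro h
      rw [h, pos_self] at pγ1
      omega
    have hxb : c - 1 ≠ b := by
      intro h
      rw [h] at pγ1
      omega
    have hxc : c - 1 ≠ c := by
      intro h
      rw [h] at pγ1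
      omega
    have h := hall (c - 1) hxa hxb hxc
    rw [chiX_middle hb (by omega) (by omega)] at h
    obtain ⟨hnp, hng⟩ := negCase_of_chi h
    obtain ⟨u, w, huw, k1, k2, k3, k4⟩ := hng
    have hw : w = c - 1 := pos_inj (a := a) (by omega)
    subst hw
    have hu1 : pos a u ≠ pos a b - 1 := by
      intro h'
      have hu' : u = b - 1 := pos_inj (by rw [h', pβ1])
      rw [hu'] at huw
      exact h0 huw
    have pu1 : pos a (u + 1) = pos a u + 1 := pos_add_one (by omega)
    have hya : u + 1 ≠ a := by
      intro h''
      rw [h'', pos_self] at pu1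
      omega
    have hyb : u + 1 ≠ b := by
      intro h''
      rw [h''] at pu1
      omega
    have hyc : u + 1 ≠ c := by
      intro h''
      rw [h''] at pu1
      omega
    have h2 := hall (u + 1) hya hyb hyc
    rw [chiX_inner (by omega) (by omega) hbc] at h2
    have h2' : chiCyc A a (u + 1) b c = 1 := by omega
    obtain ⟨u', v', h', l1, l2, l3, l4, l5⟩ := posCase_of_chi h2'
    exact noCross hT a huw h' (by omega) (by omega) (by omega)
  · -- EdgeOf A (c-1) (a-1)
    by_cases h1 : pos a c = m - 1
    · have hc' : c = a - 1 := pos_inj (by rw [h1, pm1])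
      exact Or.inr (Or.inl (by linear_combination -hc'))
    by_cases h0 : (c - 1, a - 1) ∈ A
    · exact Or.inl h0
    exfalso
    have hxa : a - 1 ≠ a := by
      intro h
      rw [h, pos_self] at pm1
      omega
    have hxb : a - 1 ≠ b := by
      intro h
      rw [h] at pm1
      omega
    have hxc : a - 1 ≠ c := by
      intro h
      rw [h] at pm1
      omega
    have h := hall (a - 1) hxa hxb hxc
    rw [chiX_outer hb hbc (by omega)] at h
    obtain ⟨hnp, hng⟩ := negCase_of_chi h
    obtain ⟨u, w, huw, k1, k2, k3⟩ := (negCase_outer hb hbc (by omega)).mp hng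
    have hum := pos_lt a u
    have hu : u = a - 1 := pos_inj (a := a) (by omega)
    subst hu
    have hw1 : pos a w ≠ pos a c - 1 := by
      intro h'
      have hw' : w = c - 1 := pos_inj (by rw [h', pγ1])
      rw [hw'] at huw
      exact h0 (hT.1 _ _ huw)
    have pw1 : pos a (w + 1) = pos a w + 1 := pos_add_one (by omega)
    have hya : w + 1 ≠ a := by
      intro h''
      rw [h'', pos_self] at pw1
      omega
    have hyb : w + 1 ≠ b := by
      intro h''
      rw [h''] at pw1
      omega
    have hyc : w + 1 ≠ c := by
      intro h''
      rw [h''] at pw1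
      omega
    have h2 := hall (w + 1) hya hyb hyc
    rw [chiX_middle hb (by omega) (by omega)] at h2
    obtain ⟨hnp2, -⟩ := negCase_of_chi h2
    exact hnp2 ⟨w, a - 1, hT.1 _ _ huw, hb, k2, by omega, by omega, by omega⟩

end CyclicTri

open CyclicTri in
/-- The facets of the oriented matroid `M_T` are exactly the triangles of `T` (upper
facets) and the triangles of `T + 1` (lower facets, i.e. `H` with `H - 1` a triangle
of `T`); no other 3-subset is a facet. -/
theorem stmt_11 (m : ℕ) (hm : 4 ≤ m) (A : Set (ZMod m × ZMod m))
    (hT : IsTriangulation A) (a b c : ZMod m) (habc : Cyc3 a b c) :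
    IsFacet A a b c ↔
      (IsTriangleOf A a b c ∨ IsTriangleOf A (a - 1) (b - 1) (c - 1)) := by
  haveI : NeZero m := ⟨by omega⟩
  constructor
  · rintro ⟨-, h | h⟩
    · exact Or.inl (tri_of_pos hT habc h)
    · exact Or.inr (tri_of_neg hT habc h)
  · rintro (h | h)
    · exact ⟨habc, Or.inl (facet_pos_of_tri hT h)⟩
    · exact ⟨habc, Or.inr (facet_neg_of_tri hT habc h)⟩
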